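/- arXiv:1911.12791 — 2 statements merged into one kernel-verified Lean document; each statement's English description precedes it below -/
import Mathlib

section
/- Let k be a field and let Δ be a d-dimensional simplicial complex with depth k[Δ] ≥ d (i.e., depth k[Δ] ≥ dim k[Δ] − 1). Then every d-dimensional Cohen–Macaulay complex Γ with Δ ⊆ Γ is a Cohen–Macaulay extender for Δ; that is, the relative complex (Γ,Δ) is relative Cohen–Macaulay. In particular, if Δ has n+1 vertices, the d-skeleton of the n-simplex, Δ_n^{(d)} = {σ ⊆ [n+1] : |σ| ≤ d+1}, is a Cohen–Macaulay extender for Δ. -/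
/-!
Fix a face `σ` of `Γ`. If `σ ∉ Δ` the relative link is `lk_Γ σ` itself. Otherwise the long
exact sequence of the pair `(lk_Γ σ, lk_Δ σ)` contains
`H̃_i(lk_Γ σ) → H̃_i(lk_Γ σ, lk_Δ σ) → H̃_{i-1}(lk_Δ σ)`; below the top degree `i = d - |σ|`
the left group vanishes because `Γ` is Cohen–Macaulay and the right one because
`depth k[Δ] ≥ d`, while above it there are no faces at all. For the skeleton, every link is a
skeleton of a simplex, hence a cone below its top degree, hence acyclic there.
-/

/-- A simplicial complex on vertex set `ℕ`: a finite collection of finite sets of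
vertices (faces) closed under taking subsets. -/
def IsComplex (Δ : Finset (Finset ℕ)) : Prop :=
  ∀ σ ∈ Δ, ∀ τ ⊆ σ, τ ∈ Δ

/-- `P` has dimension `d`: it is nonempty and its largest face has cardinality `d + 1`. -/
def dimIs (P : Finset (Finset ℕ)) (d : ℤ) : Prop :=
  P.Nonempty ∧ ((P.sup Finset.card : ℕ) : ℤ) = d + 1

/-- The link of the face `σ` in `Δ`:  `{τ ∈ Δ : σ ∪ τ ∈ Δ, σ ∩ τ = ∅}`. -/
def lkF (Δ : Finset (Finset ℕ)) (σ : Finset ℕ) : Finset (Finset ℕ) :=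
  Δ.filter (fun τ => σ ∪ τ ∈ Δ ∧ σ ∩ τ = ∅)

/-- The space of simplicial `k`-chains of cardinality `c` supported on the set of faces
`Q`: the free `k`-vector space on the faces of `Q` of cardinality `c`.  (Taking `Q = Δ`,
with `∅ ∈ Δ`, gives the augmented chain complex computing reduced homology; taking
`Q = Γ \ Δ` gives the relative chain complex of the pair `(Γ, Δ)`.) -/
abbrev Chains (k : Type) [Field k] (Q : Finset (Finset ℕ)) (c : ℤ) : Type :=
  {σ : Finset ℕ // σ ∈ Q ∧ (σ.card : ℤ) = c} → k

/-- The simplicial boundary operator from chains of cardinality `c + 1` to chains of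
cardinality `c`, given on basis elements by `∂σ = ∑_{v ∈ σ} (-1)^{|{w ∈ σ : w < v}|} (σ∖v)`
(discarding any `σ∖v ∉ Q`); here expressed on coordinates. -/
def bdryFun (k : Type) [Field k] (Q : Finset (Finset ℕ)) (c : ℤ)
    (f : Chains k Q (c + 1)) : Chains k Q c := fun τ =>
  ∑ v ∈ (Q.sup id) \ τ.1,
    if h : insert v τ.1 ∈ Q ∧ ((insert v τ.1).card : ℤ) = c + 1 then
      (-1 : k) ^ (τ.1.filter (· < v)).card * f ⟨insert v τ.1, h⟩
    else 0

/-- The boundary operator as a linear map. -/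
def bdry (k : Type) [Field k] (Q : Finset (Finset ℕ)) (c : ℤ) :
    Chains k Q (c + 1) →ₗ[k] Chains k Q c where
  toFun := bdryFun k Q c
  map_add' f g := by
    funext τ
    simp only [bdryFun, Pi.add_apply]
    rw [← Finset.sum_add_distrib]
    refine Finset.sum_congr rfl fun v hv => ?_
    split
    · rw [mul_add]
    · rw [add_zero]
  map_smul' a f := by
    funext τ
    simp only [bdryFun, Pi.smul_apply, smul_eq_mul, RingHom.id_apply, Finset.mul_sum]
    refine Finset.sum_congr rfl fun v hv => ?_
    split
    · ring
    · rw [mul_zero]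

/-- The reduced simplicial homology in dimension `n` with coefficients in the field `k`
of the (relative) complex whose set of faces is `Q`:  cycles of cardinality `n + 1`
modulo boundaries.  For `Q = Δ` a complex (which contains the empty face `∅` whenever it
is nonempty) this is the reduced homology `H̃_n(Δ; k)`; for `Q = Γ \ Δ` it is the
relative homology `H̃_n(Γ, Δ; k)`. -/
abbrev redH (k : Type) [Field k] (Q : Finset (Finset ℕ)) (n : ℤ) : Type :=
  LinearMap.ker (bdry k Q n) ⧸
    (LinearMap.range (bdry k Q (n + 1))).comap (LinearMap.ker (bdry k Q n)).subtype

/-- The `d`-dimensional complex `Γ` is Cohen–Macaulay over `k`: for every face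
`σ ∈ Γ`, the reduced homology `H̃_i(lk_Γ(σ); k)` vanishes for all
`i ≠ d - dim σ - 1 = d - |σ|`. -/
def IsCM (k : Type) [Field k] (Γ : Finset (Finset ℕ)) (d : ℤ) : Prop :=
  ∀ σ ∈ Γ, ∀ i : ℤ, i ≠ d - (σ.card : ℤ) → Subsingleton (redH k (lkF Γ σ) i)

/-- The relative complex `(Γ, Δ)`, with `dim Γ = d`, is relative Cohen–Macaulay over
`k`: for every face `σ` of `Γ`, the relative homology
`H̃_i(lk_Γ(σ), lk_Δ(σ); k)` vanishes except possibly when `|σ| + i = d`. -/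
def RelCM (k : Type) [Field k] (Γ Δ : Finset (Finset ℕ)) (d : ℤ) : Prop :=
  ∀ σ ∈ Γ, ∀ i : ℤ, (σ.card : ℤ) + i ≠ d →
    Subsingleton (redH k (lkF Γ σ \ lkF Δ σ) i)

/-- `depth k[Δ] ≥ h`, via Hochster's formula (Reisner's criterion for depth):
`H̃_i(lk_Δ(σ); k) = 0` whenever `|σ| + i + 1 < h`. -/
def DepthGE (k : Type) [Field k] (Δ : Finset (Finset ℕ)) (h : ℤ) : Prop :=
  ∀ σ ∈ Δ, ∀ i : ℤ, (σ.card : ℤ) + i + 1 < h → Subsingleton (redH k (lkF Δ σ) i)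

/-- The `d`-skeleton of the `n`-simplex on the vertex set `[n+1]`:
all subsets of `[n+1]` of cardinality at most `d + 1`. -/
def skeleton (n : ℕ) (d : ℤ) : Finset (Finset ℕ) :=
  (Finset.Icc 1 (n + 1)).powerset.filter (fun σ => (σ.card : ℤ) ≤ d + 1)

section SimplicialChains

open Finset

variable {k : Type} [Field k]

variable (k) in
def insertSign (t : Finset ℕ) (v : ℕ) : k :=
  (-1) ^ #(t.filter (· < v))

lemma insertSign_mul_self (t : Finset ℕ) (v : ℕ) : insertSign k t v * insertSign k t v = 1 := by
  rw [insertSign, ← pow_add, ← two_mul, pow_mul, neg_one_sq, one_pow]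

lemma insertSign_insert {a b : ℕ} {t : Finset ℕ} (ha : a ∉ t) :
    insertSign k (insert a t) b = if a < b then -insertSign k t b else insertSign k t b := by
  unfold insertSign
  rw [filter_insert]
  split_ifs
  · rw [card_insert_of_notMem fun h => ha (mem_filter.1 h).1, pow_succ, mul_neg_one]
  · rfl

lemma insertSign_mul_insertSign_insert_add_swap {a b : ℕ} {t : Finset ℕ} (hab : a ≠ b)
    (ha : a ∉ t) (hb : b ∉ t) :
    insertSign k t a * insertSign k (insert a t) b
      + insertSign k t b * insertSign k (insert b t) a = 0 := by
  rcases hab.lt_or_gt with h | h <;>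
    simp only [insertSign_insert ha, insertSign_insert hb, h, h.not_gt, ↓reduceIte] <;> ring

lemma insertSign_insert_mul_insertSign_insert {a b : ℕ} {t : Finset ℕ} (hab : a ≠ b)
    (ha : a ∉ t) (hb : b ∉ t) :
    insertSign k (insert a t) b * insertSign k (insert b t) a
      = -(insertSign k t a * insertSign k t b) := by
  rcases hab.lt_or_gt with h | h <;>
    simp only [insertSign_insert ha, insertSign_insert hb, h, h.not_gt, ↓reduceIte] <;> ring

/-- The boundary in the full simplex on `V`, acting on chains written as coefficient
functions `Finset ℕ → k`. -/
def simplexBdry (V : Finset ℕ) (g : Finset ℕ → k) (τ : Finset ℕ) : k :=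
  ∑ v ∈ V \ τ, insertSign k τ v * g (insert v τ)

lemma simplexBdry_simplexBdry (V : Finset ℕ) (g : Finset ℕ → k) (τ : Finset ℕ) :
    simplexBdry V (simplexBdry V g) τ = 0 := by
  set F : ℕ → ℕ → k := fun v u =>
    insertSign k τ v * (insertSign k (insert v τ) u * g (insert u (insert v τ)))
  have hswap : ∀ p ∈ (V \ τ).offDiag, F p.1 p.2 + F p.2 p.1 = 0 := by
    rintro ⟨v, u⟩ hp
    obtain ⟨hv, hu, hvu⟩ := mem_offDiag.1 hp
    simp only [F, insert_comm u v, ← mul_assoc, ← add_mul,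
      insertSign_mul_insertSign_insert_add_swap hvu (mem_sdiff.1 hv).2 (mem_sdiff.1 hu).2,
      zero_mul]
  calc simplexBdry V (simplexBdry V g) τ
      = ∑ v ∈ V \ τ, ∑ u ∈ (V \ τ).erase v, F v u := by
        simp only [simplexBdry, mul_sum, sdiff_insert, F]
    _ = ∑ p ∈ (V \ τ).offDiag, F p.1 p.2 :=
        (sum_finset_product' _ _ _ fun p => by simp [mem_offDiag, and_comm, ne_comm]).symm
    _ = 0 := sum_involution (fun p _ => p.swap) hswap (fun p hp _ => by
          simpa [Prod.ext_iff, eq_comm] using (mem_offDiag.1 hp).2.2)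
          (fun p hp => by simp only [mem_offDiag] at hp ⊢; exact ⟨hp.2.1, hp.1, Ne.symm hp.2.2⟩)
          (fun _ _ => rfl)

/-- The cone with apex `v₀` over the part of a chain `g` not containing `v₀`. -/
def cone (v₀ : ℕ) (g : Finset ℕ → k) (ρ : Finset ℕ) : k :=
  if v₀ ∈ ρ then insertSign k (ρ.erase v₀) v₀ * g (ρ.erase v₀) else 0

lemma simplexBdry_cone_add_cone_simplexBdry {V : Finset ℕ} {v₀ : ℕ} (hv₀ : v₀ ∈ V)
    (g : Finset ℕ → k) (τ : Finset ℕ) :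
    simplexBdry V (cone v₀ g) τ + cone v₀ (simplexBdry V g) τ = g τ := by
  by_cases hτ : v₀ ∈ τ
  · obtain ⟨t, ht, rfl⟩ : ∃ t, v₀ ∉ t ∧ insert v₀ t = τ :=
      ⟨τ.erase v₀, notMem_erase v₀ τ, insert_erase hτ⟩
    have hV : V \ t = insert v₀ (V \ insert v₀ t) := by
      rw [sdiff_insert, insert_erase (mem_sdiff.2 ⟨hv₀, ht⟩)]
    have hterm : ∀ v ∈ V \ insert v₀ t,
        insertSign k (insert v₀ t) v * cone v₀ g (insert v (insert v₀ t))
          + insertSign k t v₀ * (insertSign k t v * g (insert v t)) = 0 := by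
      intro v hv
      obtain ⟨hvv₀, hvt⟩ : v ≠ v₀ ∧ v ∉ t := by simpa [not_or] using (mem_sdiff.1 hv).2
      have hv₀vt : v₀ ∉ insert v t := by simpa [Ne.symm hvv₀] using ht
      rw [cone, if_pos (mem_insert_of_mem (mem_insert_self v₀ t)), insert_comm,
        erase_insert hv₀vt, ← mul_assoc, ← mul_assoc,
        insertSign_insert_mul_insertSign_insert (Ne.symm hvv₀) ht hvt]
      ring
    have hsum := sum_eq_zero hterm
    rw [sum_add_distrib] at hsum
    rw [cone, if_pos (mem_insert_self v₀ t), erase_insert ht, simplexBdry, simplexBdry, hV,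
      sum_insert (fun h => (mem_sdiff.1 h).2 (mem_insert_self v₀ t)), mul_add, mul_sum]
    linear_combination hsum + g (insert v₀ t) * insertSign_mul_self (k := k) t v₀
  · rw [cone, if_neg hτ, add_zero, simplexBdry, sum_eq_single_of_mem v₀ (mem_sdiff.2 ⟨hv₀, hτ⟩)]
    · rw [cone, if_pos (mem_insert_self v₀ τ), erase_insert hτ, ← mul_assoc,
        insertSign_mul_self, one_mul]
    · intro v _ hv
      rw [cone, if_neg (by simpa [Ne.symm hv] using hτ), mul_zero]

end SimplicialChains

section RelativeHomology

open Finset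

variable {k : Type} [Field k] {P Q : Finset (Finset ℕ)} {c : ℤ}

abbrev Face (Q : Finset (Finset ℕ)) (c : ℤ) : Type :=
  {σ : Finset ℕ // σ ∈ Q ∧ (σ.card : ℤ) = c}

def chainExt (f : Chains k Q c) (ρ : Finset ℕ) : k :=
  if h : ρ ∈ Q ∧ (ρ.card : ℤ) = c then f ⟨ρ, h⟩ else 0

def chainOf (Q : Finset (Finset ℕ)) (c : ℤ) (g : Finset ℕ → k) : Chains k Q c :=
  fun ρ => g ρ.1

lemma chainExt_apply (f : Chains k Q c) (ρ : Face Q c) : chainExt f ρ.1 = f ρ :=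
  dif_pos ρ.2

lemma chainExt_eq_zero_of_notMem (f : Chains k Q c) {ρ : Finset ℕ} (hρ : ρ ∉ Q) :
    chainExt f ρ = 0 :=
  dif_neg fun h => hρ h.1

lemma chainExt_chainOf (g : Finset ℕ → k) (ρ : Finset ℕ) :
    chainExt (chainOf Q c g) ρ = if ρ ∈ Q ∧ (ρ.card : ℤ) = c then g ρ else 0 := by
  unfold chainExt chainOf
  split_ifs <;> rfl

lemma chainExt_chainOf_chainExt (f : Chains k P c) {ρ : Finset ℕ}
    (h : ρ ∉ Q → chainExt f ρ = 0) : chainExt (chainOf Q c (chainExt f)) ρ = chainExt f ρ := by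
  rw [chainExt_chainOf]
  split_ifs with hρ
  · rfl
  · by_cases hQ : ρ ∈ Q
    · rw [chainExt, dif_neg fun h' => hρ ⟨hQ, h'.2⟩]
    · exact (h hQ).symm

lemma bdry_apply_eq_simplexBdry {V : Finset ℕ} (hV : Q.sup id ⊆ V) (f : Chains k Q (c + 1))
    (τ : Face Q c) : bdry k Q c f τ = simplexBdry V (chainExt f) τ.1 := by
  have hzero : ∀ v ∈ V \ τ.1, v ∉ Q.sup id \ τ.1 →
      insertSign k τ.1 v * chainExt f (insert v τ.1) = 0 := by
    intro v hv hv'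
    rw [chainExt_eq_zero_of_notMem f fun h => hv' (mem_sdiff.2
      ⟨le_sup (f := id) h (mem_insert_self v τ.1), (mem_sdiff.1 hv).2⟩), mul_zero]
  rw [simplexBdry, ← sum_subset (sdiff_subset_sdiff hV le_rfl) hzero]
  refine sum_congr rfl fun v _ => ?_
  unfold chainExt
  split_ifs
  · rfl
  · rw [mul_zero]

lemma simplexBdry_congr {V τ : Finset ℕ} {g g' : Finset ℕ → k}
    (h : ∀ v ∉ τ, g (insert v τ) = g' (insert v τ)) : simplexBdry V g τ = simplexBdry V g' τ :=
  sum_congr rfl fun v hv => by rw [h v (mem_sdiff.1 hv).2]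

lemma bdry_apply_eq_bdry_apply {f : Chains k P (c + 1)} {g : Chains k Q (c + 1)}
    {τ : Face P c} {τ' : Face Q c} (hτ : τ.1 = τ'.1)
    (h : ∀ v ∉ τ.1, chainExt f (insert v τ.1) = chainExt g (insert v τ.1)) :
    bdry k P c f τ = bdry k Q c g τ' := by
  rw [bdry_apply_eq_simplexBdry (subset_union_left (s₂ := Q.sup id)),
    bdry_apply_eq_simplexBdry (subset_union_right (s₁ := P.sup id)), ← hτ]
  exact simplexBdry_congr h

lemma IsComplex.ordConnected (hQ : IsComplex Q) : (Q : Set (Finset ℕ)).OrdConnected :=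
  ⟨fun _ _ y hy _ hz => hQ y hy _ hz.2⟩

lemma chainExt_bdry {V : Finset ℕ} (hV : Q.sup id ⊆ V) (hQ : (Q : Set (Finset ℕ)).OrdConnected)
    (f : Chains k Q (c + 1 + 1)) {τ ρ : Finset ℕ} (hτ : τ ∈ Q) (hτρ : τ ⊆ ρ) :
    chainExt (bdry k Q (c + 1) f) ρ = simplexBdry V (chainExt f) ρ := by
  by_cases hρ : ρ ∈ Q ∧ (ρ.card : ℤ) = c + 1
  · rw [chainExt, dif_pos hρ, bdry_apply_eq_simplexBdry hV]
  · rw [chainExt, dif_neg hρ, simplexBdry]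
    refine (sum_eq_zero fun u hu => ?_).symm
    rw [chainExt, dif_neg, mul_zero]
    rintro ⟨hmem, hcard⟩
    rw [card_insert_of_notMem (mem_sdiff.1 hu).2, Nat.cast_succ] at hcard
    exact hρ ⟨hQ.out hτ hmem ⟨hτρ, subset_insert u ρ⟩, by omega⟩

lemma bdry_bdry (hQ : (Q : Set (Finset ℕ)).OrdConnected) (f : Chains k Q (c + 1 + 1)) :
    bdry k Q c (bdry k Q (c + 1) f) = 0 := by
  funext τ
  rw [bdry_apply_eq_simplexBdry le_rfl, Pi.zero_apply,
    ← simplexBdry_simplexBdry (Q.sup id) (chainExt f) τ.1]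
  exact simplexBdry_congr fun v _ => chainExt_bdry le_rfl hQ f τ.2.1 (subset_insert v τ.1)

lemma subsingleton_redH_iff {n : ℤ} :
    Subsingleton (redH k Q n) ↔ ∀ z : Chains k Q (n + 1), bdry k Q n z = 0 →
      ∃ y : Chains k Q (n + 1 + 1), bdry k Q (n + 1) y = z := by
  rw [Submodule.Quotient.subsingleton_iff, Submodule.eq_top_iff']
  exact ⟨fun H z hz => H ⟨z, hz⟩, fun H z => H z.1 z.2⟩

lemma subsingleton_redH_of_forall_card_ne {n : ℤ} (h : ∀ ρ ∈ Q, (ρ.card : ℤ) ≠ n + 1) :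
    Subsingleton (redH k Q n) := by
  have : Subsingleton (Chains k Q (n + 1)) := ⟨fun _ _ => funext fun ρ => (h ρ.1 ρ.2.1 ρ.2.2).elim⟩
  exact subsingleton_redH_iff.2 fun z _ => ⟨0, Subsingleton.elim _ _⟩

end RelativeHomology

section Vanishing

open Finset

variable {k : Type} [Field k]

lemma bdry_chainOf_chainExt_of_subcomplex {L M : Finset (Finset ℕ)} (hM : IsComplex M)
    (hML : M ⊆ L) {c : ℤ} (y : Chains k M (c + 1)) (ρ : Face L c) :
    bdry k L c (chainOf L _ (chainExt y)) ρ = chainExt (bdry k M c y) ρ.1 := by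
  have hext : ∀ σ, chainExt (chainOf L (c + 1) (chainExt y)) σ = chainExt y σ := fun σ =>
    chainExt_chainOf_chainExt y fun hσ => chainExt_eq_zero_of_notMem y fun h => hσ (hML h)
  by_cases hρ : ρ.1 ∈ M
  · rw [bdry_apply_eq_bdry_apply (f := chainOf L _ (chainExt y)) (g := y) (τ := ρ)
      (τ' := ⟨ρ.1, hρ, ρ.2.2⟩) rfl fun v _ => hext _]
    exact (chainExt_apply _ _).symm
  · rw [chainExt_eq_zero_of_notMem _ hρ, bdry_apply_eq_simplexBdry le_rfl, simplexBdry]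
    exact sum_eq_zero fun v _ => by
      rw [hext, chainExt_eq_zero_of_notMem y fun h => hρ (hM _ h _ (subset_insert v _)),
        mul_zero]

lemma bdry_chainOf_chainExt_sdiff {L M : Finset (Finset ℕ)} (hM : IsComplex M) {c : ℤ}
    (Y : Chains k L (c + 1)) (ρ : Face (L \ M) c) :
    bdry k (L \ M) c (chainOf (L \ M) _ (chainExt Y)) ρ
      = bdry k L c Y ⟨ρ.1, (mem_sdiff.1 ρ.2.1).1, ρ.2.2⟩ := by
  refine bdry_apply_eq_bdry_apply rfl fun v _ => chainExt_chainOf_chainExt Y fun h =>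
    chainExt_eq_zero_of_notMem Y fun hL => h (mem_sdiff.2 ⟨hL, fun hM' => ?_⟩)
  exact (mem_sdiff.1 ρ.2.1).2 (hM _ hM' _ (subset_insert v _))

/-- The segment `H̃_{j+1}(L) → H̃_{j+1}(L, M) → H̃_j(M)` of the long exact sequence of the
pair. -/
theorem subsingleton_redH_sdiff {L M : Finset (Finset ℕ)} (hL : IsComplex L)
    (hM : IsComplex M) (hML : M ⊆ L) {j : ℤ} (hLj : Subsingleton (redH k L (j + 1)))
    (hMj : Subsingleton (redH k M j)) : Subsingleton (redH k (L \ M) (j + 1)) := by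
  rw [subsingleton_redH_iff] at hLj hMj ⊢
  intro z hz
  set zL : Chains k L (j + 1 + 1) := chainOf L _ (chainExt z)
  have hzL : chainOf (L \ M) _ (chainExt zL) = z := funext fun ρ =>
    (chainExt_chainOf_chainExt z fun hρ => chainExt_eq_zero_of_notMem z fun h =>
      hρ (mem_sdiff.1 h).1).trans (chainExt_apply z ρ)
  set w := bdry k L (j + 1) zL
  have hw : ∀ ρ : Face L (j + 1), ρ.1 ∉ M → w ρ = 0 := fun ρ hρ => by
    have h := bdry_chainOf_chainExt_sdiff hM zL ⟨ρ.1, mem_sdiff.2 ⟨ρ.2.1, hρ⟩, ρ.2.2⟩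
    rw [hzL, hz] at h
    exact h.symm
  set wM : Chains k M (j + 1) := chainOf M _ (chainExt w)
  have hwM : ∀ ρ, chainExt wM ρ = chainExt w ρ := fun ρ => chainExt_chainOf_chainExt w
    fun hρ => by unfold chainExt; split_ifs with h; exacts [hw ⟨ρ, h⟩ hρ, rfl]
  obtain ⟨yM, hyM⟩ := hMj wM <| funext fun ρ =>
    (bdry_apply_eq_bdry_apply (f := wM) (g := w) (τ' := ⟨ρ.1, hML ρ.2.1, ρ.2.2⟩) rfl
      fun v _ => hwM _).trans (congrFun (bdry_bdry hL.ordConnected zL) _)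
  set yL : Chains k L (j + 1 + 1) := chainOf L _ (chainExt yM)
  have hyL : bdry k L (j + 1) yL = w := funext fun ρ => by
    rw [bdry_chainOf_chainExt_of_subcomplex hM hML, hyM, hwM, chainExt_apply]
  obtain ⟨Y, hY⟩ := hLj (zL - yL) (by rw [map_sub, hyL, sub_self])
  refine ⟨chainOf (L \ M) _ (chainExt Y), funext fun ρ => ?_⟩
  rw [bdry_chainOf_chainExt_sdiff hM, hY, Pi.sub_apply]
  show chainExt z ρ.1 - chainExt yM ρ.1 = z ρ
  rw [chainExt_eq_zero_of_notMem yM (mem_sdiff.1 ρ.2.1).2, sub_zero, chainExt_apply]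

theorem subsingleton_redH_of_cone {L : Finset (Finset ℕ)} (hL : IsComplex L) {v₀ : ℕ} {i : ℤ}
    (hcone : ∀ t ∈ L, (t.card : ℤ) = i + 1 → insert v₀ t ∈ L) : Subsingleton (redH k L i) := by
  rw [subsingleton_redH_iff]
  intro z hz
  have hV : L.sup id ⊆ insert v₀ (L.sup id) := subset_insert _ _
  have hext : chainExt (chainOf L (i + 1 + 1) (cone v₀ (chainExt z))) = cone v₀ (chainExt z) := by
    funext ρ
    rw [chainExt_chainOf]
    split_ifs with hρ
    · rfl
    unfold cone
    split_ifs with hv₀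
    · rw [chainExt, dif_neg, mul_zero]
      rintro ⟨hmem, hcard⟩
      refine hρ ⟨insert_erase hv₀ ▸ hcone _ hmem hcard, ?_⟩
      rw [← hcard, cast_card_erase_of_mem hv₀]
      ring
    · rfl
  refine ⟨chainOf L _ (cone v₀ (chainExt z)), funext fun τ => ?_⟩
  have hcycle : cone v₀ (simplexBdry (insert v₀ (L.sup id)) (chainExt z)) τ.1 = 0 := by
    unfold cone
    split_ifs with hv₀
    · have hcard : ((τ.1.erase v₀).card : ℤ) = i := by
        rw [cast_card_erase_of_mem hv₀, τ.2.2]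
        ring
      rw [← bdry_apply_eq_simplexBdry hV z ⟨_, hL _ τ.2.1 _ (erase_subset v₀ _), hcard⟩, hz,
        Pi.zero_apply, mul_zero]
    · rfl
  rw [bdry_apply_eq_simplexBdry hV, hext, ← chainExt_apply z τ,
    ← simplexBdry_cone_add_cone_simplexBdry (mem_insert_self v₀ _) (chainExt z) τ.1, hcycle,
    add_zero]

end Vanishing

section RelativeCohenMacaulay

open Finset

variable {k : Type} [Field k] {Γ Δ : Finset (Finset ℕ)} {d : ℤ}

lemma mem_lkF {σ τ : Finset ℕ} : τ ∈ lkF Δ σ ↔ τ ∈ Δ ∧ σ ∪ τ ∈ Δ ∧ σ ∩ τ = ∅ :=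
  mem_filter

lemma IsComplex.mem_lkF_iff (hΔ : IsComplex Δ) {σ τ : Finset ℕ} :
    τ ∈ lkF Δ σ ↔ σ ∪ τ ∈ Δ ∧ Disjoint σ τ := by
  rw [mem_lkF, disjoint_iff_inter_eq_empty]
  exact ⟨fun h => h.2, fun h => ⟨hΔ _ h.1 τ subset_union_right, h⟩⟩

lemma IsComplex.isComplex_lkF (hΔ : IsComplex Δ) (σ : Finset ℕ) : IsComplex (lkF Δ σ) := by
  intro τ hτ ρ hρ
  rw [hΔ.mem_lkF_iff] at hτ ⊢
  exact ⟨hΔ _ hτ.1 _ (union_subset_union_right hρ), hτ.2.mono_right hρ⟩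

lemma lkF_mono (h : Δ ⊆ Γ) (σ : Finset ℕ) : lkF Δ σ ⊆ lkF Γ σ :=
  fun τ hτ => by
    rw [mem_lkF] at hτ ⊢
    exact ⟨h hτ.1, h hτ.2.1, hτ.2.2⟩

lemma IsComplex.lkF_eq_empty (hΔ : IsComplex Δ) {σ : Finset ℕ} (hσ : σ ∉ Δ) : lkF Δ σ = ∅ :=
  eq_empty_of_forall_notMem fun _ hτ =>
    hσ (hΔ _ ((hΔ.mem_lkF_iff).1 hτ).1 σ subset_union_left)

lemma card_add_card_le_of_mem_lkF (hΓ : ∀ ρ ∈ Γ, (ρ.card : ℤ) ≤ d + 1) {σ τ : Finset ℕ}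
    (hτ : τ ∈ lkF Γ σ) : (σ.card : ℤ) + τ.card ≤ d + 1 := by
  obtain ⟨-, hστ, hdisj⟩ := mem_lkF.1 hτ
  have := hΓ _ hστ
  rwa [card_union_of_disjoint (disjoint_iff_inter_eq_empty.2 hdisj), Nat.cast_add] at this

lemma card_le_of_dimIs (hΔ : dimIs Δ d) {ρ : Finset ℕ} (hρ : ρ ∈ Δ) : (ρ.card : ℤ) ≤ d + 1 := by
  rw [← hΔ.2]
  exact_mod_cast le_sup (f := card) hρ

lemma exists_card_eq_of_dimIs (hΔ : dimIs Δ d) : ∃ ρ ∈ Δ, (ρ.card : ℤ) = d + 1 := by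
  obtain ⟨ρ, hρ, heq⟩ := exists_mem_eq_sup Δ hΔ.1 card
  exact ⟨ρ, hρ, heq ▸ hΔ.2⟩

lemma dimIs_of_subset (hΔ : dimIs Δ d) (hΔΓ : Δ ⊆ Γ) (hΓ : ∀ ρ ∈ Γ, (ρ.card : ℤ) ≤ d + 1) :
    dimIs Γ d := by
  obtain ⟨ρ, hρ, hcard⟩ := exists_card_eq_of_dimIs hΔ
  obtain ⟨ρ', hρ', heq⟩ := exists_mem_eq_sup Γ (hΔ.1.mono hΔΓ) card
  refine ⟨hΔ.1.mono hΔΓ, le_antisymm (heq ▸ hΓ ρ' hρ') ?_⟩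
  rw [← hcard]
  exact_mod_cast le_sup (f := card) (hΔΓ hρ)

theorem relCM_of_depthGE (hΓ : IsComplex Γ) (hΔ : IsComplex Δ)
    (hdim : ∀ ρ ∈ Γ, (ρ.card : ℤ) ≤ d + 1) (hCM : IsCM k Γ d) (hΔΓ : Δ ⊆ Γ)
    (hdepth : DepthGE k Δ d) : RelCM k Γ Δ d := by
  intro σ hσ i hi
  by_cases hσΔ : σ ∈ Δ
  · rcases hi.lt_or_gt with hlt | hgt
    · obtain ⟨j, rfl⟩ : ∃ j, i = j + 1 := ⟨i - 1, by ring⟩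
      exact subsingleton_redH_sdiff (hΓ.isComplex_lkF σ) (hΔ.isComplex_lkF σ) (lkF_mono hΔΓ σ)
        (hCM σ hσ _ (by omega)) (hdepth σ hσΔ j (by omega))
    · refine subsingleton_redH_of_forall_card_ne fun ρ hρ hcard => ?_
      have := card_add_card_le_of_mem_lkF hdim (mem_sdiff.1 hρ).1
      omega
  · rw [hΔ.lkF_eq_empty hσΔ, sdiff_empty]
    exact hCM σ hσ i (by omega)

end RelativeCohenMacaulay

section Skeleton

open Finset

variable {k : Type} [Field k] {n : ℕ} {d : ℤ}

lemma mem_skeleton {σ : Finset ℕ} :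
    σ ∈ skeleton n d ↔ σ ⊆ Icc 1 (n + 1) ∧ (σ.card : ℤ) ≤ d + 1 := by
  rw [skeleton, mem_filter, mem_powerset]

lemma isComplex_skeleton (n : ℕ) (d : ℤ) : IsComplex (skeleton n d) := fun σ hσ τ hτ => by
  rw [mem_skeleton] at hσ ⊢
  exact ⟨hτ.trans hσ.1, le_trans (by exact_mod_cast card_le_card hτ) hσ.2⟩

/-- Links in a skeleton of a simplex are skeleta of simplices again; below the top degree
they are cones over any vertex not in the face. -/
theorem isCM_skeleton (hdn : d ≤ n) : IsCM k (skeleton n d) d := by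
  intro σ hσ i hi
  have hsk : ∀ ρ ∈ skeleton n d, (ρ.card : ℤ) ≤ d + 1 := fun ρ hρ => (mem_skeleton.1 hρ).2
  by_cases hfaces : i + 1 < 0 ∨ d < σ.card + i
  · exact subsingleton_redH_of_forall_card_ne fun ρ hρ hcard => by
      have := card_add_card_le_of_mem_lkF hsk hρ
      omega
  rw [not_or, not_lt, not_lt] at hfaces
  obtain ⟨v₀, hv₀⟩ : (Icc 1 (n + 1) \ σ).Nonempty := by
    rw [← card_pos, card_sdiff_of_subset (mem_skeleton.1 hσ).1, Nat.card_Icc]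
    omega
  obtain ⟨hv₀I, hv₀σ⟩ := mem_sdiff.1 hv₀
  refine subsingleton_redH_of_cone ((isComplex_skeleton n d).isComplex_lkF σ) (v₀ := v₀)
    fun t ht hcard => ?_
  rw [(isComplex_skeleton n d).mem_lkF_iff] at ht ⊢
  obtain ⟨hσt, hdisj⟩ := ht
  refine ⟨?_, disjoint_insert_right.2 ⟨hv₀σ, hdisj⟩⟩
  rw [union_insert, mem_skeleton]
  refine ⟨insert_subset hv₀I (mem_skeleton.1 hσt).1, ?_⟩
  calc ((insert v₀ (σ ∪ t)).card : ℤ) ≤ (σ ∪ t).card + 1 := by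
        exact_mod_cast card_insert_le _ _
    _ = σ.card + t.card + 1 := by rw [card_union_of_disjoint hdisj, Nat.cast_add]
    _ ≤ d + 1 := by omega

end Skeleton

/-- If `Δ` is a `d`-dimensional complex with `depth k[Δ] ≥ d = dim k[Δ] - 1`, then every
`d`-dimensional Cohen–Macaulay complex `Γ ⊇ Δ` is a Cohen–Macaulay extender for `Δ`,
i.e. `(Γ,Δ)` is relative Cohen–Macaulay.  In particular, if the vertices of `Δ` lie in
`[n+1]`, the `d`-skeleton of the `n`-simplex is a Cohen–Macaulay extender for `Δ`. -/
theorem CM_extender_of_depth (k : Type) [Field k] (d : ℤ)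
    (Δ : Finset (Finset ℕ)) (hΔ : IsComplex Δ) (hdim : dimIs Δ d)
    (hdepth : DepthGE k Δ d) :
    (∀ Γ : Finset (Finset ℕ), IsComplex Γ → dimIs Γ d → IsCM k Γ d → Δ ⊆ Γ →
      RelCM k Γ Δ d) ∧
    (∀ n : ℕ, (∀ σ ∈ Δ, σ ⊆ Finset.Icc 1 (n + 1)) →
      IsComplex (skeleton n d) ∧ dimIs (skeleton n d) d ∧ Δ ⊆ skeleton n d ∧
        IsCM k (skeleton n d) d ∧ RelCM k (skeleton n d) Δ d) := by
  have hextender : ∀ Γ, IsComplex Γ → dimIs Γ d → IsCM k Γ d → Δ ⊆ Γ → RelCM k Γ Δ d :=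
    fun Γ hΓ hdimΓ hCM hΔΓ =>
      relCM_of_depthGE hΓ hΔ (fun _ => card_le_of_dimIs hdimΓ) hCM hΔΓ hdepth
  refine ⟨hextender, fun n hn => ?_⟩
  obtain ⟨ρ, hρ, hcard⟩ := exists_card_eq_of_dimIs hdim
  have hdn : d ≤ n := by
    have := Finset.card_le_card (hn ρ hρ)
    rw [Nat.card_Icc] at this
    omega
  have hΔsk : Δ ⊆ skeleton n d := fun σ hσ =>
    mem_skeleton.2 ⟨hn σ hσ, card_le_of_dimIs hdim hσ⟩
  have hdimsk : dimIs (skeleton n d) d :=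
    dimIs_of_subset hdim hΔsk fun _ hσ => (mem_skeleton.1 hσ).2
  have hCMsk : IsCM k (skeleton n d) d := isCM_skeleton hdn
  exact ⟨isComplex_skeleton n d, hdimsk, hΔsk, hCMsk,
    hextender _ (isComplex_skeleton n d) hdimsk hCMsk hΔsk⟩
end

section
/- Fix an integer d ≥ 1 and define g : {0,1,…,d+1} → ℤ by the recurrence g(0) = 0 and g(k) = k(2^{d+1} − 2^k) + Σ_{j=0}^{k−1} C(k,j) g(j) for k ≥ 1. Then g(k) ≤ 2^{2^k − 1 + d} for all 0 ≤ k ≤ d+1. -/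
/- Bounding every `g j` with `0 < j < k` by the bound for `j = k - 1` and summing the binomial
coefficients reduces the induction step to the inequality `2k + (2^k - 2) A ≤ 2 A²` for
`A = 2^{2^{k-1} - 1}`, which holds because both `k` and `2^{k-1}` are at most `A`. -/

open Finset

theorem sum_range_choose_succ_succ (m : ℕ) :
    ∑ i ∈ range m, ((m + 1).choose (i + 1) : ℤ) = 2 ^ (m + 1) - 2 := by
  have h := Nat.sum_range_choose (m + 1)
  rw [sum_range_succ, sum_range_succ'] at h
  simp only [Nat.choose_self, Nat.choose_zero_right] at h
  rw [eq_sub_iff_add_eq]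
  exact_mod_cast h

theorem sum_range_choose_mul_le_of_apply_zero {x : ℕ → ℤ} {C : ℤ} (m : ℕ) (hx0 : x 0 = 0)
    (hx : ∀ j, 1 ≤ j → j ≤ m → x j ≤ C) :
    ∑ j ∈ range (m + 1), ((m + 1).choose j : ℤ) * x j ≤ (2 ^ (m + 1) - 2) * C := by
  rw [sum_range_succ', hx0, mul_zero, add_zero, ← sum_range_choose_succ_succ, sum_mul]
  refine sum_le_sum fun i hi => mul_le_mul_of_nonneg_left (hx _ le_add_self ?_) (Nat.cast_nonneg _)
  exact mem_range.mp hi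

theorem two_mul_succ_add_le_two_pow_two_pow_sub_one (m : ℕ) :
    2 * (m + 1 : ℤ) + (2 ^ (m + 1) - 2) * 2 ^ (2 ^ m - 1) ≤ 2 ^ (2 ^ (m + 1) - 1) := by
  have hm : m < 2 ^ m := Nat.lt_two_pow_self
  have hsq : (2 : ℤ) ^ (2 ^ (m + 1) - 1) = 2 * (2 ^ (2 ^ m - 1)) ^ 2 := by
    rw [← pow_mul, ← pow_succ']
    congr 1
    rw [pow_succ]
    omega
  have hpow : (2 : ℤ) ^ m ≤ 2 ^ (2 ^ m - 1) := pow_le_pow_right₀ one_le_two (by omega)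
  have hsucc : (m + 1 : ℤ) ≤ 2 ^ m := by exact_mod_cast hm
  rw [hsq, pow_succ]
  nlinarith

theorem partition_extender_size_bound_general (d : ℕ) (g : ℕ → ℤ)
    (hg0 : g 0 = 0)
    (hgrec : ∀ k : ℕ, 1 ≤ k → k ≤ d + 1 →
      g k = (k : ℤ) * (2 ^ (d + 1) - 2 ^ k) +
        ∑ j ∈ Finset.range k, (Nat.choose k j : ℤ) * g j) :
    ∀ k : ℕ, k ≤ d + 1 → g k ≤ 2 ^ (2 ^ k - 1 + d) := by
  intro k
  induction k using Nat.strong_induction_on with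
  | _ k ih =>
    intro hk
    rcases k with _ | m
    · rw [hg0]; positivity
    have hprev : ∀ j, 1 ≤ j → j ≤ m → g j ≤ 2 ^ (2 ^ m - 1) * 2 ^ d := by
      intro j _ hjm
      rw [← pow_add]
      refine (ih j (by omega) (by omega)).trans (pow_le_pow_right₀ one_le_two ?_)
      have : 2 ^ j ≤ 2 ^ m := Nat.pow_le_pow_right two_pos hjm
      omega
    calc g (m + 1)
        ≤ (m + 1 : ℤ) * 2 ^ (d + 1) + (2 ^ (m + 1) - 2) * (2 ^ (2 ^ m - 1) * 2 ^ d) := by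
          rw [hgrec (m + 1) le_add_self hk]
          push_cast
          gcongr
          · linarith [pow_pos (two_pos : (0 : ℤ) < 2) (m + 1)]
          · exact sum_range_choose_mul_le_of_apply_zero m hg0 hprev
      _ = (2 * (m + 1 : ℤ) + (2 ^ (m + 1) - 2) * 2 ^ (2 ^ m - 1)) * 2 ^ d := by ring
      _ ≤ 2 ^ (2 ^ (m + 1) - 1) * 2 ^ d := by
          gcongr
          exact two_mul_succ_add_le_two_pow_two_pow_sub_one m
      _ = 2 ^ (2 ^ (m + 1) - 1 + d) := (pow_add _ _ _).symm

/-- Fix `d ≥ 1` and let `g` satisfy `g 0 = 0` and, for `1 ≤ k ≤ d + 1`,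
`g k = k (2^{d+1} - 2^k) + ∑_{j=0}^{k-1} C(k,j) g j` (the recurrence counting the faces
of the recursively constructed `(d, d-k)`-partition extender).  Then
`g k ≤ 2^{2^k - 1 + d}` for all `0 ≤ k ≤ d + 1`. -/
theorem partition_extender_size_bound (d : ℕ) (hd : 1 ≤ d) (g : ℕ → ℤ)
    (hg0 : g 0 = 0)
    (hgrec : ∀ k : ℕ, 1 ≤ k → k ≤ d + 1 →
      g k = (k : ℤ) * (2 ^ (d + 1) - 2 ^ k) +
        ∑ j ∈ Finset.range k, (Nat.choose k j : ℤ) * g j) :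
    ∀ k : ℕ, k ≤ d + 1 → g k ≤ 2 ^ (2 ^ k - 1 + d) :=
  partition_extender_size_bound_general d g hg0 hgrec
end
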